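/- Let w : ℝ×Λ → ℝ be a measurable function such that x ↦ w(x) − sgn(x₁) m_β is integrable over ℝ×Λ. Then there is exactly one b ∈ ℝ with ∫_{ℝ×Λ} (w(x) − m̄_b(x)) dx = 0, and for every c ∈ ℝ one has |b − c| ≤ (1/(2 m_β L^d)) ∫_{ℝ×Λ} |w(x) − m̄_c(x)| dx. -/

import Mathlib

open MeasureTheory Real Filter Set

noncomputable section

/-- Ambient space `ℝ^{d+1}`; the cylinder `ℝ × Λ` (with `Λ` the `d`-dimensional torus of
side `L`) is encoded as `ℝ^{d+1}` together with `L`-periodicity in the coordinates `i ≠ 0`. -/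
abbrev Amb (d : ℕ) := EuclideanSpace ℝ (Fin (d + 1))

/-- Fundamental domain of the cylinder `ℝ × Λ`. -/
def cylDom (d : ℕ) (L : ℝ) : Set (Amb d) :=
  {x | ∀ i : Fin (d + 1), i ≠ 0 → x i ∈ Set.Ico (0 : ℝ) L}

/-- Periodicity (period `L`) in each transverse direction. -/
def CylPeriodic (d : ℕ) (L : ℝ) (u : Amb d → ℝ) : Prop :=
  ∀ (x : Amb d) (i : Fin (d + 1)), i ≠ 0 → u (x + EuclideanSpace.single i L) = u x

/-- Convolution (computed on the universal cover `ℝ^{d+1}`, which agrees with the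
cylinder convolution by periodization of the kernel). -/
def conv {d : ℕ} (J u : Amb d → ℝ) : Amb d → ℝ := fun x => ∫ y, J (x - y) * u y

/-- Square of the `L²(ℝ×Λ)` norm. -/
def l2sq (d : ℕ) (L : ℝ) (u : Amb d → ℝ) : ℝ := ∫ x in cylDom d L, (u x) ^ 2

/-- `L¹(ℝ×Λ)` norm. -/
def l1norm (d : ℕ) (L : ℝ) (u : Amb d → ℝ) : ℝ := ∫ x in cylDom d L, |u x|

/-- Square of the `L²(ℝ×Λ)` norm of the gradient. -/
def gradl2sq (d : ℕ) (L : ℝ) (u : Amb d → ℝ) : ℝ :=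
  ∫ x in cylDom d L, ‖gradient u x‖ ^ 2

/-- Sobolev `W^{s,2}(ℝ×Λ)` norm. -/
def sobNorm (d : ℕ) (L : ℝ) (s : ℕ) (u : Amb d → ℝ) : ℝ :=
  ∑ j ∈ Finset.range (s + 1),
    (∫ x in cylDom d L, ‖iteratedFDeriv ℝ j u x‖ ^ 2) ^ (1 / 2 : ℝ)

/-- The mobility `σ(m) = β (1 - m²)`. -/
def mob (β m : ℝ) : ℝ := β * (1 - m ^ 2)

/-- Inverse hyperbolic tangent. -/
def atanh (x : ℝ) : ℝ := (1 / 2) * Real.log ((1 + x) / (1 - x))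

/-- The double-well potential. -/
def fpot (β m : ℝ) : ℝ :=
  -m ^ 2 / 2 + (1 / β) * (((1 + m) / 2) * Real.log ((1 + m) / 2)
    + ((1 - m) / 2) * Real.log ((1 - m) / 2))

/-- Partial derivative in the `i`-th coordinate direction. -/
def pd {d : ℕ} (i : Fin (d + 1)) (u : Amb d → ℝ) : Amb d → ℝ :=
  fun x => fderiv ℝ u x (EuclideanSpace.single i 1)

/-- Divergence of a vector field. -/
def divg {d : ℕ} (F : Amb d → Amb d) : Amb d → ℝ :=
  fun x => ∑ i : Fin (d + 1), fderiv ℝ (fun y => F y i) x (EuclideanSpace.single i 1)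

/-- The Laplacian. -/
def lapl (d : ℕ) (u : Amb d → ℝ) : Amb d → ℝ :=
  fun x => ∑ i : Fin (d + 1), pd i (pd i u) x

/-- Squared `L²(ℝ×Λ)` norm of `(-Δ)^{j/2} u`: for even `j` it is `‖Δ^{j/2}u‖₂²`,
for odd `j` it is `‖∇ Δ^{(j-1)/2} u‖₂²`. -/
def fracSq (d : ℕ) (L : ℝ) (j : ℕ) (u : Amb d → ℝ) : ℝ :=
  if j % 2 = 0 then ∫ x in cylDom d L, ((lapl d)^[j / 2] u x) ^ 2
  else ∫ x in cylDom d L, ‖gradient ((lapl d)^[j / 2] u) x‖ ^ 2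

/-- The point of the cylinder with longitudinal coordinate `x₁` and transverse
coordinate `y`. -/
def emb (d : ℕ) (x₁ : ℝ) (y : EuclideanSpace ℝ (Fin d)) : Amb d :=
  (EuclideanSpace.equiv (Fin (d + 1)) ℝ).symm (Fin.cons x₁ (fun j => y j))

/-- Fundamental domain of the torus `Λ`. -/
def transDom (d : ℕ) (L : ℝ) : Set (EuclideanSpace ℝ (Fin d)) :=
  {y | ∀ j : Fin d, y j ∈ Set.Ico (0 : ℝ) L}

/-- Transverse mean `v₁(x₁) = L^{-d} ∫_Λ v(x₁, x^⊥) dx^⊥`. -/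
def transMean (d : ℕ) (L : ℝ) (v : Amb d → ℝ) (x₁ : ℝ) : ℝ :=
  (1 / L ^ d) * ∫ y in transDom d L, v (emb d x₁ y)

/-- The data of the problem: dimension `D = d+1`, torus side `L > 0`, inverse
temperature `β > 1`, interaction kernel `J` (a smooth, spherically symmetric,
compactly supported probability density), the equilibrium magnetization `m_β`
(the positive solution of `m = tanh (β m)`), and the instanton `m̄₀` (denoted `mb`),
with its standard properties. -/
structure Setting (d : ℕ) where
  L : ℝ
  hL : 0 < L
  β : ℝ
  hβ : 1 < β
  J : Amb d → ℝ
  hJsmooth : ∀ n : ℕ, ContDiff ℝ n J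
  hJcompact : HasCompactSupport J
  hJnonneg : ∀ x, 0 ≤ J x
  hJprob : (∫ x, J x) = 1
  hJradial : ∀ x y : Amb d, ‖x‖ = ‖y‖ → J x = J y
  mβ : ℝ
  hmβ0 : 0 < mβ
  hmβ1 : mβ < 1
  hmβtanh : mβ = Real.tanh (β * mβ)
  mb : ℝ → ℝ
  hmb_smooth : ∀ n : ℕ, ContDiff ℝ n mb
  hmb_odd : ∀ x, mb (-x) = -mb x
  hmb_mono : StrictMono mb
  hmb_range : ∀ x, mb x ∈ Set.Ioo (-mβ) mβ
  hmb_top : Tendsto mb atTop (nhds mβ)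
  hmb_bot : Tendsto mb atBot (nhds (-mβ))
  hmb_euler : ∀ x₁ : ℝ, (1 / β) * atanh (mb x₁)
      = ∫ y : Amb d, J (EuclideanSpace.single (0 : Fin (d + 1)) x₁ - y) * mb (y 0)
  Cm : ℝ
  αm : ℝ
  hCm : 0 < Cm
  hαm : 0 < αm
  hmb_exp1 : ∀ x : ℝ, 0 < mβ ^ 2 - mb x ^ 2 ∧ mβ ^ 2 - mb x ^ 2 ≤ Cm * Real.exp (-αm * |x|)
  hmb_exp2 : ∀ x : ℝ, 0 < deriv mb x ∧ deriv mb x ≤ Cm * Real.exp (-αm * |x|)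
  hmb_exp3 : ∀ x : ℝ, |deriv (deriv mb) x| ≤ Cm * Real.exp (-αm * |x|)

variable {d : ℕ}

/-- The planar front `m̄_a`. -/
def instanton (S : Setting d) (a : ℝ) : Amb d → ℝ := fun x => S.mb (x 0 - a)

/-- `m̄_a' = ∂_{x₁} m̄_a`. -/
def instantonD (S : Setting d) (a : ℝ) : Amb d → ℝ := fun x => deriv S.mb (x 0 - a)

/-- The second variation of the free energy at `m̄_a`:
`B_a v = v/(β(1-m̄_a²)) - J⋆v`. -/
def Bop (S : Setting d) (a : ℝ) (v : Amb d → ℝ) : Amb d → ℝ :=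
  fun x => v x / (S.β * (1 - S.mb (x 0 - a) ^ 2)) - conv S.J v x

/-- The one-dimensional operator `A_a v = v/(β(1-m̄_a²)) - J̄⋆v`. -/
def Aop (S : Setting d) (a : ℝ) (v : ℝ → ℝ) : ℝ → ℝ :=
  fun x₁ => v x₁ / (S.β * (1 - S.mb (x₁ - a) ^ 2))
    - ∫ y : Amb d, S.J (EuclideanSpace.single (0 : Fin (d + 1)) x₁ - y) * v (y 0)

/-- The Gates–Penrose–Lebowitz free energy. -/
def freeEnergy (S : Setting d) (m : Amb d → ℝ) : ℝ :=
  (∫ x in cylDom d S.L, (fpot S.β (m x) - fpot S.β S.mβ))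
  + (1 / 4) * ∫ x in cylDom d S.L, ∫ y, S.J (x - y) * (m x - m y) ^ 2

/-- Finiteness of the free energy. -/
def FreeEnergyFinite (S : Setting d) (m : Amb d → ℝ) : Prop :=
  IntegrableOn (fun x => fpot S.β (m x) - fpot S.β S.mβ) (cylDom d S.L) ∧
  IntegrableOn (fun x => ∫ y, S.J (x - y) * (m x - m y) ^ 2) (cylDom d S.L)

/-- The dissipation functional
`I(m) = ∫ σ(m) |∇(β⁻¹ arctanh m - J⋆m)|² dx`. -/
def dissip (S : Setting d) (m : Amb d → ℝ) : ℝ :=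
  ∫ x in cylDom d S.L,
    mob S.β (m x) * ‖gradient (fun y => (1 / S.β) * atanh (m y) - conv S.J m y) x‖ ^ 2

/-- Right-hand side of the evolution equation `∂m/∂t = ∇·(∇m - β(1-m²) J⋆∇m)`. -/
def evolRhs (S : Setting d) (m : Amb d → ℝ) : Amb d → ℝ :=
  divg (fun y => gradient m y
    - (S.β * (1 - m y ^ 2)) • (∫ z, S.J (y - z) • gradient m z))

/-- `m` is a classical solution of the evolution equation on the cylinder, taking
values in `[-1,1]`, periodic, with square-integrable gradient for positive times. -/
def IsSolution (S : Setting d) (m : ℝ → Amb d → ℝ) : Prop :=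
  (∀ t, CylPeriodic d S.L (m t)) ∧
  (∀ t x, m t x ∈ Set.Icc (-1 : ℝ) 1) ∧
  (∀ t x, HasDerivAt (fun s => m s x) (evolRhs S (m t) x) t) ∧
  (∀ t, 0 < t → IntegrableOn (fun x => ‖gradient (m t) x‖ ^ 2) (cylDom d S.L))

/-- `a` is the (assumed unique) minimizer of `b ↦ ‖m(t) - m̄_b‖₂`. -/
def IsShift (S : Setting d) (m : ℝ → Amb d → ℝ) (a : ℝ → ℝ) : Prop :=
  ∀ t b, l2sq d S.L (fun x => m t x - instanton S (a t) x)
    ≤ l2sq d S.L (fun x => m t x - instanton S b x)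

/-- `v(t) = m(t) - m̄_{a(t)}`. -/
def vsel (S : Setting d) (m : ℝ → Amb d → ℝ) (a : ℝ → ℝ) (t : ℝ) : Amb d → ℝ :=
  fun x => m t x - instanton S (a t) x

/-- The spectral gap of `B_a` on the orthogonal complement of `m̄_a'`. -/
def SpectralGap (S : Setting d) (γ : ℝ) : Prop :=
  ∀ (a : ℝ) (v : Amb d → ℝ), Measurable v →
    IntegrableOn (fun x => v x ^ 2) (cylDom d S.L) →
    (∫ x in cylDom d S.L, v x * instantonD S a x) = 0 →
    γ * l2sq d S.L v ≤ ∫ x in cylDom d S.L, Bop S a v x * v x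

/-! The function `F b = ∫_{ℝ×Λ} (w - m̄_b)` is affine in `b` with slope `2 m_β L^d`.
Indeed, `w - m̄_b = (w - sgn(x₁) m_β) - (m̄_b - sgn(x₁) m_β)`; the second integrand depends
on `x₁` only, so its integral is `L^d` times a line integral, and translating `m̄₀` by `b`
changes `∫_ℝ (m̄₀ - sgn m_β)` by `-2 m_β b` because `∫_ℝ (sgn t - sgn (t - b)) dt = 2b`.
The tail `m̄₀ - sgn m_β` is integrable by the exponential decay of `m_β² - m̄₀²`. Hence `F`
has exactly one zero `b`, and `|b - c| = |F c| / (2 m_β L^d) ≤ (2 m_β L^d)⁻¹ ∫ |w - m̄_c|`. -/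

lemma Real.measurable_sign : Measurable Real.sign :=
  Measurable.ite measurableSet_Iio measurable_const
    (Measurable.ite measurableSet_Ioi measurable_const measurable_const)

lemma integrable_exp_neg_mul_abs {a : ℝ} (ha : 0 < a) :
    Integrable fun x : ℝ => exp (-a * |x|) := by
  have hIoi : IntegrableOn (fun x : ℝ => exp (-a * |x|)) (Ioi 0) :=
    (exp_neg_integrableOn_Ioi 0 ha).congr_fun (fun x hx => by rw [abs_of_pos hx]) measurableSet_Ioi
  have hIio : IntegrableOn (fun x : ℝ => exp (-a * |x|)) (Iio 0) := by
    have := (neg_zero (G := ℝ) ▸ hIoi).comp_neg_Iio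
    simpa only [abs_neg] using this
  have := hIio.union ((integrableOn_Ici_iff_integrableOn_Ioi (by finiteness)).2 hIoi)
  rwa [Iio_union_Ici, integrableOn_univ] at this

lemma integrable_sign_sub_sign_sub_and_integral_eq (h : ℝ) :
    Integrable (fun x => sign x - sign (x - h)) ∧ ∫ x, (sign x - sign (x - h)) = 2 * h := by
  wlog hh : 0 ≤ h generalizing h
  · obtain ⟨hint, hval⟩ := this (-h) (by linarith)
    have hshift : (fun x => sign x - sign (x - h))
        = fun x => -(sign (x - h) - sign (x - h - -h)) := by
      funext x; simp only [sub_neg_eq_add, sub_add_cancel]; ring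
    rw [hshift]
    refine ⟨(hint.comp_sub_right h).neg, ?_⟩
    rw [integral_neg, integral_sub_right_eq_self (fun x => sign x - sign (x - -h)), hval]
    ring
  have hae : (fun x => sign x - sign (x - h)) =ᵐ[volume] (Ioc 0 h).indicator fun _ => 2 := by
    filter_upwards [((countable_singleton h).insert 0).ae_notMem volume] with x hx
    simp only [mem_insert_iff, mem_singleton_iff, not_or] at hx
    rcases Ne.lt_or_gt hx.1 with hx0 | hx0
    · rw [sign_of_neg hx0, sign_of_neg (by linarith), indicator_of_notMem (by simp [hx0.not_gt])]
      ring
    rcases Ne.lt_or_gt hx.2 with hxh | hxh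
    · rw [sign_of_pos hx0, sign_of_neg (by linarith),
        indicator_of_mem (show x ∈ Ioc 0 h from ⟨hx0, hxh.le⟩)]
      ring
    · rw [sign_of_pos hx0, sign_of_pos (by linarith), indicator_of_notMem (by simp [hxh.not_ge])]
      ring
  refine ⟨(integrable_indicator_iff measurableSet_Ioc).mpr ?_ |>.congr hae.symm, ?_⟩
  · exact integrableOn_const (by simp)
  · rw [integral_congr_ae hae, integral_indicator_const _ measurableSet_Ioc, Real.volume_real_Ioc,
      sub_zero, max_eq_left hh, smul_eq_mul, mul_comm]

lemma integrable_comp_sub_sub_sign_and_integral_eq {f : ℝ → ℝ} {m : ℝ}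
    (hf : Integrable fun x => f x - sign x * m) (c : ℝ) :
    Integrable (fun x => f (x - c) - sign x * m) ∧
      ∫ x, (f (x - c) - sign x * m) = (∫ x, (f x - sign x * m)) - 2 * m * c := by
  obtain ⟨hsign, hsign_eq⟩ := integrable_sign_sub_sign_sub_and_integral_eq c
  have hshift : Integrable fun x => f (x - c) - sign (x - c) * m := hf.comp_sub_right c
  have hsplit : (fun x => f (x - c) - sign x * m)
      = fun x => (f (x - c) - sign (x - c) * m) - (sign x - sign (x - c)) * m := by
    funext x; ring
  rw [hsplit]
  refine ⟨hshift.sub (hsign.mul_const m), ?_⟩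
  rw [integral_sub hshift (hsign.mul_const m),
    integral_sub_right_eq_self (fun x => f x - sign x * m), integral_mul_const, hsign_eq]
  ring

def cylCoord (d : ℕ) : ℝ × (Fin d → ℝ) ≃ᵐ Amb d :=
  (MeasurableEquiv.piFinSuccAbove (fun _ : Fin (d + 1) => ℝ) 0).symm.trans
    (MeasurableEquiv.toLp 2 (Fin (d + 1) → ℝ))

lemma measurePreserving_cylCoord (d : ℕ) : MeasurePreserving (cylCoord d) :=
  (volume_preserving_piFinSuccAbove (fun _ : Fin (d + 1) => ℝ) 0).symm.trans
    (EuclideanSpace.volume_preserving_symm_measurableEquiv_toLp _).symm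

@[simp]
lemma cylCoord_apply_zero (p : ℝ × (Fin d → ℝ)) : cylCoord d p 0 = p.1 := by
  simp [cylCoord]

lemma preimage_cylCoord_cylDom (L : ℝ) :
    cylCoord d ⁻¹' cylDom d L = univ ×ˢ univ.pi fun _ => Ico 0 L := by
  ext p
  simp [cylCoord, cylDom, Fin.forall_fin_succ]

lemma map_coord_zero_restrict_cylDom (L : ℝ) :
    (volume.restrict (cylDom d L)).map (fun x : Amb d => x 0)
      = ENNReal.ofReal L ^ d • volume := by
  rw [← ((measurePreserving_cylCoord d).restrict_preimage_emb
      (cylCoord d).measurableEmbedding (cylDom d L)).map_eq,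
    Measure.map_map (by fun_prop) (cylCoord d).measurable, preimage_cylCoord_cylDom,
    Measure.volume_eq_prod, ← Measure.prod_restrict,
    show (fun x : Amb d => x 0) ∘ cylCoord d = Prod.fst from funext cylCoord_apply_zero,
    Measure.map_fst_prod, Measure.restrict_apply_univ, Measure.restrict_univ, volume_pi_pi]
  simp [Real.volume_Ico]

lemma integrableOn_cylDom_comp_coord_zero {E : Type*} [NormedAddCommGroup E] (L : ℝ)
    {g : ℝ → E} (hg : Integrable g) :
    IntegrableOn (fun x : Amb d => g (x 0)) (cylDom d L) := by
  have hg' : Integrable g ((volume.restrict (cylDom d L)).map fun x : Amb d => x 0) := by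
    rw [map_coord_zero_restrict_cylDom]
    exact hg.smul_measure (by finiteness)
  exact (integrable_map_measure hg'.aestronglyMeasurable (by fun_prop)).mp hg'

lemma setIntegral_cylDom_comp_coord_zero {E : Type*} [NormedAddCommGroup E] [NormedSpace ℝ E]
    {L : ℝ} (hL : 0 ≤ L) {g : ℝ → E} (hg : AEStronglyMeasurable g) :
    ∫ x in cylDom d L, g (x 0) = L ^ d • ∫ t, g t := by
  have hg' : AEStronglyMeasurable g ((volume.restrict (cylDom d L)).map fun x : Amb d => x 0) := by
    rw [map_coord_zero_restrict_cylDom]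
    exact hg.smul_measure _
  rw [← integral_map (by fun_prop) hg', map_coord_zero_restrict_cylDom, integral_smul_measure,
    ENNReal.toReal_pow, ENNReal.toReal_ofReal hL]

lemma existsUnique_eq_zero_and_abs_sub_le_of_affine {F : ℝ → ℝ} {a K : ℝ} (hK : 0 < K)
    (hF : ∀ b, F b = a + K * b) :
    (∃! b, F b = 0) ∧ ∀ b c, F b = 0 → |b - c| ≤ |F c| / K := by
  refine ⟨⟨-a / K, ?_, fun b hb => ?_⟩, fun b c hb => ?_⟩
  · change F (-a / K) = 0
    rw [hF]
    field_simp
    ring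
  · rw [eq_div_iff hK.ne']
    linarith [hF b, show F b = 0 from hb]
  · have ha : a = -(K * b) := by linarith [hF b]
    rw [hF, ha, le_div_iff₀ hK, show -(K * b) + K * c = K * (c - b) by ring, abs_mul,
      abs_of_pos hK, abs_sub_comm, mul_comm]

namespace Setting

variable (S : Setting d)

lemma mb_zero : S.mb 0 = 0 := by
  have h := S.hmb_odd 0
  rw [neg_zero] at h
  linarith

lemma mβ_mul_abs_mb_sub_sign_le (x : ℝ) :
    S.mβ * |S.mb x - sign x * S.mβ| ≤ S.mβ ^ 2 - S.mb x ^ 2 := by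
  obtain ⟨hlo, hhi⟩ := S.hmb_range x
  have hmβ := S.hmβ0
  rcases lt_trichotomy x 0 with hx | rfl | hx
  · have : S.mb x < 0 := S.mb_zero ▸ S.hmb_mono hx
    rw [sign_of_neg hx, abs_of_nonneg (by linarith)]
    nlinarith
  · simp [S.mb_zero, sq_nonneg]
  · have : 0 < S.mb x := S.mb_zero ▸ S.hmb_mono hx
    rw [sign_of_pos hx, abs_of_nonpos (by linarith)]
    nlinarith

lemma integrable_mb_sub_sign : Integrable fun x => S.mb x - sign x * S.mβ := by
  refine ((integrable_exp_neg_mul_abs S.hαm).const_mul (S.Cm / S.mβ)).mono'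
    ((S.hmb_smooth 0).continuous.measurable.sub
      (measurable_sign.mul_const _)).aestronglyMeasurable (.of_forall fun x => ?_)
  rw [norm_eq_abs, div_mul_eq_mul_div, le_div_iff₀ S.hmβ0, mul_comm]
  exact (S.mβ_mul_abs_mb_sub_sign_le x).trans (S.hmb_exp1 x).2

end Setting

theorem stmt11_general (d : ℕ) (S : Setting d) (w : Amb d → ℝ)
    (hint : IntegrableOn (fun x => w x - Real.sign (x 0) * S.mβ) (cylDom d S.L)) :
    (∃! b : ℝ, (∫ x in cylDom d S.L, (w x - instanton S b x)) = 0) ∧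
    ∀ b c : ℝ, (∫ x in cylDom d S.L, (w x - instanton S b x)) = 0 →
      |b - c| ≤ (1 / (2 * S.mβ * S.L ^ d)) *
        ∫ x in cylDom d S.L, |w x - instanton S c x| := by
  have hK : 0 < 2 * S.mβ * S.L ^ d := by have := S.hmβ0; have := S.hL; positivity
  have hF : ∀ b, ∫ x in cylDom d S.L, (w x - instanton S b x)
      = ((∫ x in cylDom d S.L, (w x - sign (x 0) * S.mβ))
          - S.L ^ d * ∫ t, (S.mb t - sign t * S.mβ)) + 2 * S.mβ * S.L ^ d * b := by
    intro b
    obtain ⟨htail, htail_eq⟩ :=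
      integrable_comp_sub_sub_sign_and_integral_eq S.integrable_mb_sub_sign b
    calc ∫ x in cylDom d S.L, (w x - instanton S b x)
        = ∫ x in cylDom d S.L,
            ((w x - sign (x 0) * S.mβ) - (S.mb (x 0 - b) - sign (x 0) * S.mβ)) := by
          simp only [instanton, sub_sub_sub_cancel_right]
      _ = (∫ x in cylDom d S.L, (w x - sign (x 0) * S.mβ))
            - S.L ^ d * ∫ t, (S.mb (t - b) - sign t * S.mβ) := by
          rw [integral_sub hint (integrableOn_cylDom_comp_coord_zero S.L htail),
            setIntegral_cylDom_comp_coord_zero S.hL.le htail.aestronglyMeasurable, smul_eq_mul]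
      _ = _ := by rw [htail_eq]; ring
  obtain ⟨hunique, hbound⟩ := existsUnique_eq_zero_and_abs_sub_le_of_affine hK hF
  refine ⟨hunique, fun b c hb => (hbound b c hb).trans ?_⟩
  rw [one_div_mul_eq_div]
  gcongr
  exact abs_integral_le_integral_abs

/-- **Selection of the front by the conservation law.** If `w − sgn(x₁) m_β` is integrable
on the cylinder, there is exactly one `b` with `∫ (w − m̄_b) = 0`, and for every `c`,
`|b − c| ≤ (2 m_β L^d)⁻¹ ∫ |w − m̄_c|`. -/
theorem stmt11 (d : ℕ) (S : Setting d) (w : Amb d → ℝ) (hw : Measurable w)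
    (hint : IntegrableOn (fun x => w x - Real.sign (x 0) * S.mβ) (cylDom d S.L)) :
    (∃! b : ℝ, (∫ x in cylDom d S.L, (w x - instanton S b x)) = 0) ∧
    ∀ b c : ℝ, (∫ x in cylDom d S.L, (w x - instanton S b x)) = 0 →
      |b - c| ≤ (1 / (2 * S.mβ * S.L ^ d)) *
        ∫ x in cylDom d S.L, |w x - instanton S c x| :=
  stmt11_general d S w hint
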